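/- arXiv:math/0103017 — 2 statements merged into one kernel-verified Lean document; each statement's English description precedes it below -/
import Mathlib

section
/- Let C be a premodular G-category over a field K of characteristic zero. For every α, β ∈ G, in the Verlinde algebra of C one has ω_α ⊗ ω_β = Δ_0 · ω_{α+β}, where ω_γ = Σ_{i ∈ I_γ} dim(V_i)·V_i and Δ_0 = Σ_{i ∈ I_0} dim(V_i)². -/
/-!
Expanding `ω α` over the simples of degree `α` and using `V ⊗ ω = dim V • ω` gives
`ω α * ω β = Δ α • ω (α + β)`, and by commutativity also `Δ β • ω (α + β)`. Taking `β = 0`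
yields `Δ α • ω α = Δ 0 • ω α`; multiplying by a simple of degree `β`, whose dimension is
invertible, transports this identity to degree `α + β`.
-/

open Finset

section Verlinde

variable {K G ι A : Type*} [CommSemiring K] [AddCommMonoid G] {cl : ι → A} {dgr : ι → G}
  {dm : ι → K} {I : G → Finset ι} {ω : G → A} {Δ : G → K}

theorem omega_mul_omega_eq_smul_left [Semiring A] [Algebra K A]
    (hI : ∀ α, ∀ i ∈ I α, dgr i = α) (hω : ∀ α, ω α = ∑ i ∈ I α, dm i • cl i)
    (hΔ : ∀ α, Δ α = ∑ i ∈ I α, dm i ^ 2)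
    (hmul : ∀ i α, cl i * ω α = dm i • ω (α + dgr i)) (α β : G) :
    ω α * ω β = Δ α • ω (α + β) := by
  rw [hω α, sum_mul, hΔ α, sum_smul]
  refine sum_congr rfl fun i hi => ?_
  rw [smul_mul_assoc, hmul, hI α i hi, smul_smul, ← sq, add_comm β]

theorem omega_mul_omega_eq_smul_right [CommSemiring A] [Algebra K A]
    (hI : ∀ α, ∀ i ∈ I α, dgr i = α) (hω : ∀ α, ω α = ∑ i ∈ I α, dm i • cl i)
    (hΔ : ∀ α, Δ α = ∑ i ∈ I α, dm i ^ 2)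
    (hmul : ∀ i α, cl i * ω α = dm i • ω (α + dgr i)) (α β : G) :
    ω α * ω β = Δ β • ω (α + β) := by
  rw [mul_comm, omega_mul_omega_eq_smul_left hI hω hΔ hmul, add_comm]

end Verlinde

theorem smul_add_eq_of_smul_eq_of_mul_eq_smul {K G A : Type*} [Field K] [AddCommMonoid G]
    [Semiring A] [Algebra K A] {ω : G → A} {a : A} {d : K} {δ : G}
    (ha : ∀ γ, a * ω γ = d • ω (γ + δ)) (hd : d ≠ 0) {c c' : K} {γ : G}
    (h : c • ω γ = c' • ω γ) : c • ω (γ + δ) = c' • ω (γ + δ) := by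
  have key : d • c • ω (γ + δ) = d • c' • ω (γ + δ) := by
    rw [smul_comm d c, smul_comm d c', ← ha, ← mul_smul_comm, ← mul_smul_comm, h]
  exact smul_right_injective A hd key

/-- `cl i` is the Verlinde class of the simple object indexed by `i`, `dgr i` its grading,
`dm i` its quantum dimension, and `I α` the set of iso-classes of simple objects in `C_α`. -/
theorem omega_mul_omega_general {K : Type*} [Field K]
    {G : Type*} [AddCommGroup G] {ι : Type*}
    {A : Type*} [CommRing A] [Algebra K A]
    (cl : ι → A) (dgr : ι → G) (dm : ι → K)
    (I : G → Finset ι) (hI : ∀ (α : G) (i : ι), i ∈ I α ↔ dgr i = α)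
    (ω : G → A) (hω : ∀ α, ω α = ∑ i ∈ I α, dm i • cl i)
    (Δ : G → K) (hΔ : ∀ α, Δ α = ∑ i ∈ I α, dm i ^ 2)
    (hmul : ∀ (i : ι) (α : G), cl i * ω α = dm i • ω (α + dgr i))
    (hdm : ∀ i, dm i ≠ 0)
    (hne : ∀ α : G, (I α).Nonempty) :
    ∀ α β : G, ω α * ω β = Δ 0 • ω (α + β) := by
  have hdeg : ∀ α, ∀ i ∈ I α, dgr i = α := fun α i => (hI α i).mp
  intro α β
  have hα : Δ α • ω α = Δ 0 • ω α := by
    simpa using (omega_mul_omega_eq_smul_left hdeg hω hΔ hmul α 0).symm.trans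
      (omega_mul_omega_eq_smul_right hdeg hω hΔ hmul α 0)
  obtain ⟨i, hi⟩ := hne β
  calc ω α * ω β = Δ α • ω (α + β) := omega_mul_omega_eq_smul_left hdeg hω hΔ hmul α β
    _ = Δ 0 • ω (α + β) := by
      simpa [hdeg β i hi] using smul_add_eq_of_smul_eq_of_mul_eq_smul (hmul i) (hdm i) hα

/-- In the Verlinde algebra of a premodular G-category,
ω_α ⊗ ω_β = Δ₀ • ω_{α+β}, where ω_γ = Σ_{i∈I_γ} dim(V_i)·V_i and
Δ₀ = Σ_{i∈I₀} dim(V_i)². Here `cl i` is the Verlinde class of the simple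
object indexed by i, `dgr i` its grading, `dm i` its quantum dimension,
and `I α` the (finite) set of iso-classes of simple objects in C_α. -/
theorem omega_mul_omega {K : Type*} [Field K] [CharZero K]
    {G : Type*} [AddCommGroup G] {ι : Type*}
    {A : Type*} [CommRing A] [Algebra K A]
    (cl : ι → A) (dgr : ι → G) (dm : ι → K)
    (I : G → Finset ι) (hI : ∀ (α : G) (i : ι), i ∈ I α ↔ dgr i = α)
    (ω : G → A) (hω : ∀ α, ω α = ∑ i ∈ I α, dm i • cl i)
    (Δ : G → K) (hΔ : ∀ α, Δ α = ∑ i ∈ I α, dm i ^ 2)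
    (hmul : ∀ (i : ι) (α : G), cl i * ω α = dm i • ω (α + dgr i))
    (hdm : ∀ i, dm i ≠ 0)
    (hne : ∀ α : G, (I α).Nonempty) :
    ∀ α β : G, ω α * ω β = Δ 0 • ω (α + β) :=
  omega_mul_omega_general cl dgr dm I hI ω hω Δ hΔ hmul hdm hne
end

section
/- Let C be a premodular G-category with Δ_0 ≠ 0, and let V be a simple object of C_α such that the Hopf link evaluation satisfies ⟨H(Λ_μ, V)⟩ = dim(Λ_μ)·dim(V) for every simple object Λ_μ of C_0. Then the encircling operator of V by ω_0 equals Δ_0·id, and consequently V is C_0-transparent. -/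
theorem sum_mul_hopf_div_eq_sum_sq {K ι : Type*} [Field K] (I0 : Finset ι) (dm Hopf : ι → K)
    {dimV : K} (hdimV : dimV ≠ 0) (hH : ∀ i ∈ I0, Hopf i = dm i * dimV) :
    (∑ i ∈ I0, dm i * Hopf i) / dimV = ∑ i ∈ I0, dm i ^ 2 := by
  rw [div_eq_iff hdimV, Finset.sum_mul]
  refine Finset.sum_congr rfl fun i hi => ?_
  rw [hH i hi]
  ring

/-- If the Hopf link evaluations satisfy
⟨H(Λ_μ, V)⟩ = dim(Λ_μ)·dim(V) for all simple Λ_μ ∈ C₀, then the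
encircling operator of V by ω₀ is the scalar t₀ = Δ₀ ≠ 0, and hence
(by the transparency criterion) V is C₀-transparent. -/
theorem hopf_unlink_implies_transparent {K : Type*} [Field K] {ι : Type*}
    (I0 : Finset ι) (dm : ι → K) (Hopf : ι → K) (dimV : K)
    (t0 Δ0 : K)
    (hΔ : Δ0 = ∑ i ∈ I0, dm i ^ 2) (hΔne : Δ0 ≠ 0) (hdimV : dimV ≠ 0)
    (ht0 : t0 = (∑ i ∈ I0, dm i * Hopf i) / dimV)
    (hH : ∀ i ∈ I0, Hopf i = dm i * dimV)
    (transparentV : Prop)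
    (hcrit : t0 ≠ 0 → transparentV) :
    t0 = Δ0 ∧ transparentV := by
  have ht0Δ : t0 = Δ0 := by
    rw [ht0, hΔ, sum_mul_hopf_div_eq_sum_sq I0 dm Hopf hdimV hH]
  exact ⟨ht0Δ, hcrit (ht0Δ ▸ hΔne)⟩
end
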